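/- Let μ ∈ ℂ with Re μ > 0. For every f ∈ F_μ(0) (i.e. f ∈ F_μ with f'(0) = −μ/π) and every z ∈ D, |f'(z)/f(z) − μ(|z|²·conj(z) − 1)/(π(1 − z)(1 − |z|⁴))| ≤ |μ|·|z|/(π(1 − |z|⁴)). -/

import Mathlib

open Complex Set Metric

noncomputable section

/-- The open unit disk in `ℂ`. -/
def unitDisk : Set ℂ := Metric.ball (0 : ℂ) 1

/-- `P_f(z) = (2π/μ)·(z f'(z)/f(z)) + (1+z)/(1−z)`. -/
def Pfun (μ : ℂ) (f : ℂ → ℂ) (z : ℂ) : ℂ :=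
  2 * (Real.pi : ℂ) / μ * (z * deriv f z / f z) + (1 + z) / (1 - z)

/-- Membership in the class `F_μ`: analytic, non-vanishing on the disk, `f(0) = 1`,
and `Re P_f > 0` on the disk. -/
def memF (μ : ℂ) (f : ℂ → ℂ) : Prop :=
  AnalyticOnNhd ℂ f unitDisk ∧ (∀ z ∈ unitDisk, f z ≠ 0) ∧ f 0 = 1 ∧
    ∀ z ∈ unitDisk, 0 < (Pfun μ f z).re

/-- Membership in the class `F_μ(λ)`: `f ∈ F_μ` with `f'(0) = (μ/π)(λ − 1)`. -/
def memFlam (μ lam : ℂ) (f : ℂ → ℂ) : Prop :=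
  memF μ f ∧ deriv f 0 = μ / (Real.pi : ℂ) * (lam - 1)

/-- The branch of `log f` vanishing at `0`: `log f(z) = ∫₀^z f'(ζ)/f(ζ) dζ`
(integral over the segment from `0` to `z`). -/
def logf (f : ℂ → ℂ) (z : ℂ) : ℂ :=
  ∫ t in (0:ℝ)..1, deriv f (t * z) / f (t * z) * z

/-- The region of variability `V(z₀, λ) = {log f(z₀) : f ∈ F_μ(λ)}`. -/
def Vset (μ lam z₀ : ℂ) : Set ℂ := {w | ∃ f, memFlam μ lam f ∧ w = logf f z₀}

/-- `δ(w, λ) = (w + λ)/(1 + conj(λ) w)`. -/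
def dl (lam w : ℂ) : ℂ := (w + lam) / (1 + (starRingEnd ℂ) lam * w)

/-- `log H_{a,λ}(z) = (μ/π)·∫₀^z (δ(aζ,λ) − 1)/((1 − δ(aζ,λ)ζ)(1 − ζ)) dζ`
(integral over the segment from `0` to `z`). -/
def Hlog (μ lam a z : ℂ) : ℂ :=
  μ / (Real.pi : ℂ) *
    ∫ t in (0:ℝ)..1,
      (dl lam (a * (t * z)) - 1) /
        ((1 - dl lam (a * (t * z)) * (t * z)) * (1 - t * z)) * z

/-- The function `H_{a,λ}(z) = exp(log H_{a,λ}(z))`. -/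
def Hfun (μ lam a z : ℂ) : ℂ := Complex.exp (Hlog μ lam a z)

/-- `c(z, λ)`. -/
def cfun (z lam : ℂ) : ℂ :=
  ((‖z‖ : ℂ) ^ 2 * ((starRingEnd ℂ) z - lam) * (1 - (starRingEnd ℂ) lam)
      - (1 - lam) * (1 - (starRingEnd ℂ) lam * (starRingEnd ℂ) z)) /
    ((1 - z) * (1 - (‖z‖ : ℂ) ^ 2)
      * (1 + (‖z‖ : ℂ) ^ 2 - 2 * ((lam * z).re : ℂ)))

/-- `r(z, λ)`. -/
def rfun (z lam : ℂ) : ℝ :=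
  (1 - ‖lam‖ ^ 2) * ‖z‖ /
    ((1 - ‖z‖ ^ 2) * (1 + ‖z‖ ^ 2 - 2 * (lam * z).re))

/-- A starlike univalent function on the unit disk: analytic, `φ(0) = 0`, `φ'(0) = 1`,
univalent, and `Re(z φ'(z)/φ(z)) > 0` on the disk. -/
def IsStarlike (φ : ℂ → ℂ) : Prop :=
  AnalyticOnNhd ℂ φ unitDisk ∧ φ 0 = 0 ∧ deriv φ 0 = 1 ∧
    Set.InjOn φ unitDisk ∧
    ∀ z ∈ unitDisk, z ≠ 0 → 0 < (z * deriv φ z / φ z).re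

/-- `G(z) = (μ/π)·∫₀^z e^{iθ}ζ/(1 + (conj(λ)e^{iθ} − λ)ζ − e^{iθ}ζ²)² dζ`
(integral over the segment from `0` to `z`). -/
def Gfun (μ lam : ℂ) (θ : ℝ) (z : ℂ) : ℂ :=
  μ / (Real.pi : ℂ) *
    ∫ t in (0:ℝ)..1,
      Complex.exp (θ * Complex.I) * (t * z) /
        (1 + ((starRingEnd ℂ) lam * Complex.exp (θ * Complex.I) - lam) * (t * z)
          - Complex.exp (θ * Complex.I) * (t * z) ^ 2) ^ 2 * z

end

open Topology ComplexConjugate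

/-!
Since `Re P_f > 0` and `P_f(0) = 1`, the Cayley transform `ω = (P_f - 1)/(P_f + 1)` maps the disk
into itself with `ω(0) = 0`, and the normalisation `f'(0) = -μ/π` is exactly `P_f'(0) = 0`, so
`ω'(0) = 0` too. The Schwarz lemma then gives `ω(z) = z² W` with `|W| ≤ 1`. Solving for `f'/f`
expresses it as a Möbius image of `W`, and its distance to the centre of the claimed disk is
`|μ| |z| |W - z̄²| / (π |1 - z² W| (1 - |z|⁴))`, which is at most the radius because
`|W - a| ≤ |1 - ā W|` for `|a|, |W| ≤ 1`.
-/

lemma one_sub_ne_zero_of_norm_lt_one {R : Type*} [SeminormedRing R] [NormOneClass R] {x : R}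
    (hx : ‖x‖ < 1) : 1 - x ≠ 0 := by
  rintro h
  simp [sub_eq_zero.1 h |>.symm] at hx

lemma Complex.norm_sub_one_lt_norm_add_one {p : ℂ} (hp : 0 < p.re) : ‖p - 1‖ < ‖p + 1‖ := by
  have h : normSq (p - 1) < normSq (p + 1) := by
    simp only [normSq_apply, sub_re, sub_im, add_re, add_im, one_re, one_im]
    nlinarith
  simpa only [norm_def] using Real.sqrt_lt_sqrt (normSq_nonneg _) h

lemma Complex.norm_sub_le_norm_one_sub_conj_mul {a w : ℂ} (ha : ‖a‖ ≤ 1) (hw : ‖w‖ ≤ 1) :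
    ‖w - a‖ ≤ ‖1 - conj a * w‖ := by
  have key : normSq (1 - conj a * w) - normSq (w - a) = (1 - normSq a) * (1 - normSq w) := by
    simp only [normSq_apply, sub_re, sub_im, mul_re, mul_im, one_re, one_im, conj_re, conj_im]
    ring
  have ha' : normSq a ≤ 1 := by rw [normSq_eq_norm_sq]; nlinarith [norm_nonneg a]
  have hw' : normSq w ≤ 1 := by rw [normSq_eq_norm_sq]; nlinarith [norm_nonneg w]
  simpa only [norm_def] using Real.sqrt_le_sqrt (by nlinarith : normSq (w - a) ≤ _)

lemma exists_eq_sq_mul_of_mapsTo_ball {F : ℂ → ℂ} (hd : DifferentiableOn ℂ F (ball 0 1))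
    (hmaps : MapsTo F (ball 0 1) (ball 0 1)) (h0 : F 0 = 0) (h1 : HasDerivAt F 0 0) {z : ℂ}
    (hz : z ∈ ball (0 : ℂ) 1) : ∃ W : ℂ, ‖W‖ ≤ 1 ∧ F z = z ^ 2 * W := by
  have hlo : (F · - F 0) =o[𝓝 0] (fun w ↦ ‖w - 0‖ ^ 1) := by
    simpa [hasDerivAt_iff_isLittleO] using h1.isLittleO.norm_right
  have hbound := Complex.dist_le_mul_div_pow_of_mapsTo_ball_of_isLittleO hd
    (hmaps.mono_right (by rw [h0]; exact ball_subset_closedBall)) hlo hz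
  simp only [h0, dist_zero_right, div_one, one_mul] at hbound
  rcases eq_or_ne z 0 with rfl | hz0
  · exact ⟨0, by simp, by simp [h0]⟩
  refine ⟨F z / z ^ 2, ?_, by field_simp⟩
  rw [norm_div, norm_pow]
  exact div_le_one_of_le₀ hbound (by positivity)

lemma differentiableOn_Pfun {μ : ℂ} {f : ℂ → ℂ} (hfa : AnalyticOnNhd ℂ f unitDisk)
    (hfne : ∀ z ∈ unitDisk, f z ≠ 0) : DifferentiableOn ℂ (Pfun μ f) unitDisk :=
  ((differentiableOn_id.mul hfa.deriv.differentiableOn).div hfa.differentiableOn hfne).const_mul _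
    |>.add <| (differentiableOn_const 1).add differentiableOn_id |>.div
      ((differentiableOn_const 1).sub differentiableOn_id) fun _ hz ↦
        one_sub_ne_zero_of_norm_lt_one (mem_ball_zero_iff.1 hz)

lemma hasDerivAt_Pfun_zero {μ : ℂ} {f : ℂ → ℂ} (hfa : AnalyticAt ℂ f 0) (hf0 : f 0 ≠ 0) :
    HasDerivAt (Pfun μ f) (2 * Real.pi / μ * (deriv f 0 / f 0) + 2) 0 := by
  have hlog : HasDerivAt (fun z ↦ z * deriv f z / f z) (deriv f 0 / f 0) 0 :=
    ((hasDerivAt_id' 0).fun_mul hfa.deriv.differentiableAt.hasDerivAt).fun_div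
      hfa.differentiableAt.hasDerivAt hf0 |>.congr_deriv (by field_simp; ring)
  have hcayley : HasDerivAt (fun z : ℂ ↦ (1 + z) / (1 - z)) 2 0 :=
    ((hasDerivAt_id' 0).const_add 1).fun_div ((hasDerivAt_id' 0).const_sub 1) (by norm_num)
      |>.congr_deriv (by norm_num)
  exact (hlog.const_mul _).add hcayley

lemma exists_Pfun_sub_one_eq_sq_mul {μ : ℂ} {f : ℂ → ℂ} (hμ : μ ≠ 0) (hf : memFlam μ 0 f)
    {z : ℂ} (hz : z ∈ unitDisk) :
    ∃ W : ℂ, ‖W‖ ≤ 1 ∧ Pfun μ f z - 1 = z ^ 2 * W * (Pfun μ f z + 1) := by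
  obtain ⟨⟨hfa, hfne, hf0, hre⟩, hf'0⟩ := hf
  set p := Pfun μ f
  have h0 : (0 : ℂ) ∈ unitDisk := mem_ball_self one_pos
  have hp1 : ∀ ζ ∈ unitDisk, p ζ + 1 ≠ 0 := fun ζ hζ h ↦ by
    have := congrArg re h
    simp only [add_re, one_re, zero_re] at this
    linarith [hre ζ hζ]
  have hp0 : p 0 = 1 := by simp [p, Pfun, hf0]
  have hp'0 : HasDerivAt p 0 0 :=
    (hasDerivAt_Pfun_zero (hfa 0 h0) (by simp [hf0])).congr_deriv (by
      rw [hf'0, hf0]; field_simp; ring)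
  -- the Cayley transform of `p` is a Schwarz function vanishing to second order at `0`
  set ω : ℂ → ℂ := fun ζ ↦ (p ζ - 1) / (p ζ + 1)
  have hωd : DifferentiableOn ℂ ω unitDisk :=
    ((differentiableOn_Pfun hfa hfne).sub_const 1).div
      ((differentiableOn_Pfun hfa hfne).add_const 1) hp1
  have hωmaps : MapsTo ω unitDisk unitDisk := fun ζ hζ ↦ by
    have hlt := norm_sub_one_lt_norm_add_one (hre ζ hζ)
    simpa [unitDisk, ω, norm_div, div_lt_one ((norm_nonneg _).trans_lt hlt)] using hlt
  have hω'0 : HasDerivAt ω 0 0 :=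
    ((hp'0.sub_const 1).fun_div (hp'0.add_const 1) (hp1 0 h0)).congr_deriv (by simp)
  obtain ⟨W, hW, hωz⟩ := exists_eq_sq_mul_of_mapsTo_ball hωd hωmaps (by simp [ω, hp0]) hω'0 hz
  exact ⟨W, hW, (div_eq_iff (hp1 z hz)).1 hωz⟩

lemma deriv_div_eq_of_Pfun_sub_one_eq {μ W z : ℂ} {f : ℂ → ℂ} (hμ : μ ≠ 0) (hz0 : z ≠ 0)
    (hz1 : 1 - z ≠ 0) (hzW : 1 - z ^ 2 * W ≠ 0)
    (h : Pfun μ f z - 1 = z ^ 2 * W * (Pfun μ f z + 1)) :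
    deriv f z / f z = μ * (z * W - 1) / (Real.pi * (1 - z ^ 2 * W) * (1 - z)) := by
  rw [Pfun, mul_div_assoc] at h
  field_simp at h ⊢
  apply mul_left_cancel₀ (mul_ne_zero two_ne_zero hz0)
  linear_combination h

lemma norm_sq_mul_lt_one {W z : ℂ} (hz : ‖z‖ < 1) (hW : ‖W‖ ≤ 1) : ‖z ^ 2 * W‖ < 1 := by
  rw [norm_mul, norm_pow]
  nlinarith [norm_nonneg z, norm_nonneg W]

lemma norm_mobius_sub_center_le {μ W z : ℂ} (hz : ‖z‖ < 1) (hW : ‖W‖ ≤ 1) :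
    ‖μ * (z * W - 1) / (Real.pi * (1 - z ^ 2 * W) * (1 - z)) -
        μ * ((‖z‖ : ℂ) ^ 2 * conj z - 1) / (Real.pi * (1 - z) * (1 - (‖z‖ : ℂ) ^ 4))‖ ≤
      ‖μ‖ * ‖z‖ / (Real.pi * (1 - ‖z‖ ^ 4)) := by
  have hz4 : 0 < 1 - ‖z‖ ^ 4 := sub_pos.2 (pow_lt_one₀ (norm_nonneg z) hz four_ne_zero)
  have hsq : (‖z‖ : ℂ) ^ 2 = z * conj z := by rw [mul_conj, normSq_eq_norm_sq]; push_cast; ring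
  have hzW : 1 - z ^ 2 * W ≠ 0 := one_sub_ne_zero_of_norm_lt_one (norm_sq_mul_lt_one hz hW)
  have hz1 : 1 - z ≠ 0 := one_sub_ne_zero_of_norm_lt_one hz
  have hz4c : 1 - (‖z‖ : ℂ) ^ 4 ≠ 0 := by exact_mod_cast hz4.ne'
  have key : μ * (z * W - 1) / (Real.pi * (1 - z ^ 2 * W) * (1 - z)) -
        μ * ((‖z‖ : ℂ) ^ 2 * conj z - 1) / (Real.pi * (1 - z) * (1 - (‖z‖ : ℂ) ^ 4)) =
      μ * z * (W - conj z ^ 2) / (Real.pi * (1 - z ^ 2 * W) * (1 - (‖z‖ : ℂ) ^ 4)) := by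
    field_simp
    have : (‖z‖ : ℂ) ^ 4 = ((‖z‖ : ℂ) ^ 2) ^ 2 := by ring
    rw [this, hsq]
    ring
  have hmob : ‖W - conj z ^ 2‖ ≤ ‖1 - z ^ 2 * W‖ := by
    have ha : ‖conj z ^ 2‖ ≤ 1 := by
      rw [norm_pow, norm_conj]
      nlinarith [norm_nonneg z]
    simpa only [map_pow, conj_conj] using norm_sub_le_norm_one_sub_conj_mul ha hW
  have hnorm4 : ‖1 - (‖z‖ : ℂ) ^ 4‖ = 1 - ‖z‖ ^ 4 := by
    rw [← Real.norm_of_nonneg hz4.le, ← norm_real]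
    push_cast
    rfl
  rw [key, norm_div, norm_mul, norm_mul, norm_mul, norm_mul, hnorm4, norm_real,
    Real.norm_of_nonneg Real.pi_pos.le]
  calc ‖μ‖ * ‖z‖ * ‖W - conj z ^ 2‖ / (Real.pi * ‖1 - z ^ 2 * W‖ * (1 - ‖z‖ ^ 4))
      ≤ ‖μ‖ * ‖z‖ * ‖1 - z ^ 2 * W‖ / (Real.pi * ‖1 - z ^ 2 * W‖ * (1 - ‖z‖ ^ 4)) := by gcongr
    _ = ‖μ‖ * ‖z‖ / (Real.pi * (1 - ‖z‖ ^ 4)) := by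
      field_simp [norm_ne_zero_iff.2 hzW]

theorem stmt9 (μ : ℂ) (hμ : 0 < μ.re)
    (f : ℂ → ℂ) (hf : memFlam μ 0 f) (z : ℂ) (hz : z ∈ unitDisk) :
    ‖(deriv f z / f z -
        μ * ((‖z‖ : ℂ) ^ 2 * (starRingEnd ℂ) z - 1) /
          ((Real.pi : ℂ) * (1 - z) * (1 - (‖z‖ : ℂ) ^ 4)))‖ ≤
      ‖μ‖ * ‖z‖ / (Real.pi * (1 - ‖z‖ ^ 4)) := by
  have hμ0 : μ ≠ 0 := fun h ↦ by simp [h] at hμ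
  have hzlt : ‖z‖ < 1 := mem_ball_zero_iff.1 hz
  rcases eq_or_ne z 0 with rfl | hz0
  · obtain ⟨⟨-, -, hf0, -⟩, hf'0⟩ := hf
    simp [hf0, hf'0, neg_div]
  obtain ⟨W, hW, hPW⟩ := exists_Pfun_sub_one_eq_sq_mul hμ0 hf hz
  rw [deriv_div_eq_of_Pfun_sub_one_eq hμ0 hz0 (one_sub_ne_zero_of_norm_lt_one hzlt)
    (one_sub_ne_zero_of_norm_lt_one (norm_sq_mul_lt_one hzlt hW)) hPW]
  exact norm_mobius_sub_center_le hzlt hW
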